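/- Let m > 0, α > 0, c > 0 and define, on the open set {(I₁, I₂) : I₂ > α/c, I₁ > I₂}, the function K₀(I₁, I₂) = mc² · (I₁ − I₂ + (1/c)√(c²I₂² − α²)) / √( (I₁ − I₂)² + I₂² + (2/c)(I₁ − I₂)√(c²I₂² − α²) ) − mc². Then at every point of this set the Hessian ∇²K₀(I₁, I₂) is negative definite; in particular, the determinant of the 3×3 bordered matrix [[∇²K₀(I₁, I₂), ∇K₀(I₁, I₂)ᵀ],[∇K₀(I₁, I₂), 0]] is nonzero. -/

import Mathlib

open Real Set Matrix

/-- The unperturbed Hamiltonian of the Kepler problem with relativistic differential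
operator in action variables:
`K₀(I₁, I₂) = mc²(I₁ − I₂ + √(c²I₂² − α²)/c)/√((I₁ − I₂)² + I₂² + 2(I₁ − I₂)√(c²I₂² − α²)/c) − mc²`. -/
noncomputable def K0Rel (m α c I₁ I₂ : ℝ) : ℝ :=
  m * c ^ 2 * (I₁ - I₂ + (1 / c) * Real.sqrt (c ^ 2 * I₂ ^ 2 - α ^ 2)) /
      Real.sqrt ((I₁ - I₂) ^ 2 + I₂ ^ 2 +
        (2 / c) * (I₁ - I₂) * Real.sqrt (c ^ 2 * I₂ ^ 2 - α ^ 2)) -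
    m * c ^ 2

/-- `∂K₀/∂I₁`. -/
noncomputable def K0Rel₁ (m α c I₁ I₂ : ℝ) : ℝ :=
  deriv (fun x => K0Rel m α c x I₂) I₁

/-- `∂K₀/∂I₂`. -/
noncomputable def K0Rel₂ (m α c I₁ I₂ : ℝ) : ℝ :=
  deriv (fun y => K0Rel m α c I₁ y) I₂

/-- `∂²K₀/∂I₁²`. -/
noncomputable def K0Rel₁₁ (m α c I₁ I₂ : ℝ) : ℝ :=
  deriv (deriv fun x => K0Rel m α c x I₂) I₁

/-- `∂²K₀/∂I₂∂I₁`. -/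
noncomputable def K0Rel₁₂ (m α c I₁ I₂ : ℝ) : ℝ :=
  deriv (fun x => deriv (fun y => K0Rel m α c x y) I₂) I₁

/-- `∂²K₀/∂I₁∂I₂`. -/
noncomputable def K0Rel₂₁ (m α c I₁ I₂ : ℝ) : ℝ :=
  deriv (fun y => deriv (fun x => K0Rel m α c x y) I₁) I₂

/-- `∂²K₀/∂I₂²`. -/
noncomputable def K0Rel₂₂ (m α c I₁ I₂ : ℝ) : ℝ :=
  deriv (deriv fun y => K0Rel m α c I₁ y) I₂

lemma hasDerivAt_g (M b t : ℝ) (hb : 0 < b) :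
    HasDerivAt (fun t => M * t / Real.sqrt (t ^ 2 + b ^ 2) - M)
      (M * b ^ 2 / Real.sqrt (t ^ 2 + b ^ 2) ^ 3) t := by
  have hpos : (0:ℝ) < t ^ 2 + b ^ 2 := by positivity
  have hS : 0 < Real.sqrt (t ^ 2 + b ^ 2) := Real.sqrt_pos.2 hpos
  have hinner : HasDerivAt (fun t : ℝ => t ^ 2 + b ^ 2) (2 * t) t := by
    simpa using (hasDerivAt_pow 2 t).add_const (b ^ 2)
  have hsqrt := hinner.sqrt hpos.ne'
  have hnum : HasDerivAt (fun t : ℝ => M * t) M t := by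
    simpa using (hasDerivAt_id t).const_mul M
  have h := (hnum.fun_div hsqrt hS.ne').sub_const M
  refine h.congr_deriv ?_; symm
  have hsq : Real.sqrt (t ^ 2 + b ^ 2) ^ 2 = t ^ 2 + b ^ 2 := Real.sq_sqrt hpos.le
  field_simp
  linear_combination (-M) * hsq

lemma hasDerivAt_g' (M b t : ℝ) (hb : 0 < b) :
    HasDerivAt (fun t => M * b ^ 2 / Real.sqrt (t ^ 2 + b ^ 2) ^ 3)
      (-(3 * M * b ^ 2 * t) / Real.sqrt (t ^ 2 + b ^ 2) ^ 5) t := by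
  have hpos : (0:ℝ) < t ^ 2 + b ^ 2 := by positivity
  have hS : 0 < Real.sqrt (t ^ 2 + b ^ 2) := Real.sqrt_pos.2 hpos
  have hinner : HasDerivAt (fun t : ℝ => t ^ 2 + b ^ 2) (2 * t) t := by
    simpa using (hasDerivAt_pow 2 t).add_const (b ^ 2)
  have hsqrt := hinner.sqrt hpos.ne'
  have hcube : HasDerivAt (fun t : ℝ => Real.sqrt (t ^ 2 + b ^ 2) ^ 3)
      (3 * Real.sqrt (t ^ 2 + b ^ 2) ^ 2 * (2 * t / (2 * Real.sqrt (t ^ 2 + b ^ 2)))) t := by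
    exact hsqrt.pow 3
  have h := (hasDerivAt_const t (M * b ^ 2)).fun_div hcube (by positivity)
  refine h.congr_deriv ?_; symm
  have hsq : Real.sqrt (t ^ 2 + b ^ 2) ^ 2 = t ^ 2 + b ^ 2 := Real.sq_sqrt hpos.le
  field_simp
  ring

lemma hasDerivAt_s (b y : ℝ) (hb : 0 < b) (h : b < y) :
    HasDerivAt (fun y => Real.sqrt (y ^ 2 - b ^ 2)) (y / Real.sqrt (y ^ 2 - b ^ 2)) y := by
  have hpos : (0:ℝ) < y ^ 2 - b ^ 2 := by nlinarith
  have hinner : HasDerivAt (fun y : ℝ => y ^ 2 - b ^ 2) (2 * y) y := by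
    simpa using (hasDerivAt_pow 2 y).sub_const (b ^ 2)
  have h := hinner.sqrt hpos.ne'
  convert h using 1
  have hS : 0 < Real.sqrt (y ^ 2 - b ^ 2) := Real.sqrt_pos.2 hpos
  field_simp

lemma K0Rel_eq' (m α c x y : ℝ) (hα : 0 < α) (hc : 0 < c) (hy : α / c < y) :
    m * c ^ 2 * (x - y + (1 / c) * Real.sqrt (c ^ 2 * y ^ 2 - α ^ 2)) /
      Real.sqrt ((x - y) ^ 2 + y ^ 2 +
        (2 / c) * (x - y) * Real.sqrt (c ^ 2 * y ^ 2 - α ^ 2)) - m * c ^ 2 =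
      m * c ^ 2 * (x - y + Real.sqrt (y ^ 2 - (α / c) ^ 2)) /
        Real.sqrt ((x - y + Real.sqrt (y ^ 2 - (α / c) ^ 2)) ^ 2 + (α / c) ^ 2) - m * c ^ 2 := by
  have hb : 0 < α / c := div_pos hα hc
  have hyy : 0 ≤ y ^ 2 - (α / c) ^ 2 := by nlinarith
  set s := Real.sqrt (y ^ 2 - (α / c) ^ 2) with hs
  have hs2 : s ^ 2 = y ^ 2 - (α / c) ^ 2 := Real.sq_sqrt hyy
  have h1 : c ^ 2 * y ^ 2 - α ^ 2 = c ^ 2 * (y ^ 2 - (α / c) ^ 2) := by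
    field_simp
  have h2 : Real.sqrt (c ^ 2 * y ^ 2 - α ^ 2) = c * s := by
    rw [h1, Real.sqrt_mul (sq_nonneg c), Real.sqrt_sq hc.le, hs]
  rw [h2]
  rw [show (1 / c) * (c * s) = s by field_simp]
  rw [show (2 / c) * (x - y) * (c * s) = 2 * (x - y) * s by field_simp]
  rw [show (x - y) ^ 2 + y ^ 2 + 2 * (x - y) * s
      = (x - y + s) ^ 2 + (α / c) ^ 2 by linear_combination (-(1:ℝ)) * hs2]

lemma K0Rel_eq (m α c x y : ℝ) (hα : 0 < α) (hc : 0 < c) (hy : α / c < y) :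
    K0Rel m α c x y =
      m * c ^ 2 * (x - y + Real.sqrt (y ^ 2 - (α / c) ^ 2)) /
        Real.sqrt ((x - y + Real.sqrt (y ^ 2 - (α / c) ^ 2)) ^ 2 + (α / c) ^ 2) - m * c ^ 2 :=
  K0Rel_eq' m α c x y hα hc hy

/-- x-derivative of K0Rel at any point, for `y > α/c`. -/
lemma derivx (m α c x₀ y : ℝ) (hα : 0 < α) (hc : 0 < c) (hy : α / c < y) :
    deriv (fun x => K0Rel m α c x y) x₀ =
      m * c ^ 2 * (α / c) ^ 2 /
        Real.sqrt ((x₀ - y + Real.sqrt (y ^ 2 - (α / c) ^ 2)) ^ 2 + (α / c) ^ 2) ^ 3 := by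
  have hb : 0 < α / c := div_pos hα hc
  have hfe : (fun x => K0Rel m α c x y) =
      (fun x => m * c ^ 2 * (x - y + Real.sqrt (y ^ 2 - (α / c) ^ 2)) /
        Real.sqrt ((x - y + Real.sqrt (y ^ 2 - (α / c) ^ 2)) ^ 2 + (α / c) ^ 2) - m * c ^ 2) := by
    funext x; exact K0Rel_eq m α c x y hα hc hy
  rw [hfe]
  have hg := hasDerivAt_g (m * c ^ 2) (α / c) (x₀ - y + Real.sqrt (y ^ 2 - (α / c) ^ 2)) hb
  have hinner : HasDerivAt (fun x : ℝ => x - y + Real.sqrt (y ^ 2 - (α / c) ^ 2)) 1 x₀ := by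
    simpa using ((hasDerivAt_id x₀).sub_const y).add_const (Real.sqrt (y ^ 2 - (α / c) ^ 2))
  have := (hg.comp x₀ hinner)
  simpa [Function.comp_def] using this.deriv

/-- y-derivative of K0Rel at `y₀ > α/c`, any `x`. -/
lemma derivy (m α c x y₀ : ℝ) (hα : 0 < α) (hc : 0 < c) (hy : α / c < y₀) :
    deriv (fun y => K0Rel m α c x y) y₀ =
      m * c ^ 2 * (α / c) ^ 2 /
        Real.sqrt ((x - y₀ + Real.sqrt (y₀ ^ 2 - (α / c) ^ 2)) ^ 2 + (α / c) ^ 2) ^ 3 *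
        (y₀ / Real.sqrt (y₀ ^ 2 - (α / c) ^ 2) - 1) := by
  have hb : 0 < α / c := div_pos hα hc
  have hopen : {y : ℝ | α / c < y} ∈ nhds y₀ :=
    (isOpen_lt continuous_const continuous_id).mem_nhds hy
  have hfe : (fun y => K0Rel m α c x y) =ᶠ[nhds y₀]
      (fun y => m * c ^ 2 * (x - y + Real.sqrt (y ^ 2 - (α / c) ^ 2)) /
        Real.sqrt ((x - y + Real.sqrt (y ^ 2 - (α / c) ^ 2)) ^ 2 + (α / c) ^ 2) - m * c ^ 2) := by
    filter_upwards [hopen] with y hy'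
    exact K0Rel_eq m α c x y hα hc hy'
  rw [hfe.deriv_eq]
  have hg := hasDerivAt_g (m * c ^ 2) (α / c) (x - y₀ + Real.sqrt (y₀ ^ 2 - (α / c) ^ 2)) hb
  have hinner : HasDerivAt (fun y : ℝ => x - y + Real.sqrt (y ^ 2 - (α / c) ^ 2))
      (0 - 1 + y₀ / Real.sqrt (y₀ ^ 2 - (α / c) ^ 2)) y₀ :=
    ((hasDerivAt_const y₀ x).sub (hasDerivAt_id y₀)).add (hasDerivAt_s (α / c) y₀ hb hy)
  have h := (hg.comp y₀ hinner).deriv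
  rw [show ((fun t => m * c ^ 2 * t / Real.sqrt (t ^ 2 + (α / c) ^ 2) - m * c ^ 2) ∘
      (fun y : ℝ => x - y + Real.sqrt (y ^ 2 - (α / c) ^ 2))) =
      (fun y => m * c ^ 2 * (x - y + Real.sqrt (y ^ 2 - (α / c) ^ 2)) /
        Real.sqrt ((x - y + Real.sqrt (y ^ 2 - (α / c) ^ 2)) ^ 2 + (α / c) ^ 2) - m * c ^ 2)
      from rfl] at h
  rw [h]; ring

lemma aux_sder (s b z : ℝ) (hs : 0 < s) (hs2 : s ^ 2 = z ^ 2 - b ^ 2) :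
    (1 * s - z * (z / s)) / s ^ 2 = -(b ^ 2 / s ^ 3) := by
  field_simp
  linear_combination hs2

lemma deriv11 (m α c I₁ I₂ : ℝ) (hα : 0 < α) (hc : 0 < c) (hI₂ : α / c < I₂) :
    deriv (deriv fun x => K0Rel m α c x I₂) I₁ =
      -(3 * (m * c ^ 2) * (α / c) ^ 2 * (I₁ - I₂ + Real.sqrt (I₂ ^ 2 - (α / c) ^ 2))) /
        Real.sqrt ((I₁ - I₂ + Real.sqrt (I₂ ^ 2 - (α / c) ^ 2)) ^ 2 + (α / c) ^ 2) ^ 5 := by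
  have hb : 0 < α / c := div_pos hα hc
  rw [show (deriv fun x => K0Rel m α c x I₂) =
      (fun x => m * c ^ 2 * (α / c) ^ 2 /
        Real.sqrt ((x - I₂ + Real.sqrt (I₂ ^ 2 - (α / c) ^ 2)) ^ 2 + (α / c) ^ 2) ^ 3)
      from funext fun x => derivx m α c x I₂ hα hc hI₂]
  have hg := hasDerivAt_g' (m * c ^ 2) (α / c)
    (I₁ - I₂ + Real.sqrt (I₂ ^ 2 - (α / c) ^ 2)) hb
  have hinner : HasDerivAt (fun x : ℝ => x - I₂ + Real.sqrt (I₂ ^ 2 - (α / c) ^ 2)) 1 I₁ := by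
    simpa using ((hasDerivAt_id I₁).sub_const I₂).add_const (Real.sqrt (I₂ ^ 2 - (α / c) ^ 2))
  have h := (hg.comp I₁ hinner).deriv
  simpa [Function.comp_def] using h

lemma deriv12 (m α c I₁ I₂ : ℝ) (hα : 0 < α) (hc : 0 < c) (hI₂ : α / c < I₂) :
    deriv (fun x => deriv (fun y => K0Rel m α c x y) I₂) I₁ =
      -(3 * (m * c ^ 2) * (α / c) ^ 2 * (I₁ - I₂ + Real.sqrt (I₂ ^ 2 - (α / c) ^ 2))) /
        Real.sqrt ((I₁ - I₂ + Real.sqrt (I₂ ^ 2 - (α / c) ^ 2)) ^ 2 + (α / c) ^ 2) ^ 5 *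
        (I₂ / Real.sqrt (I₂ ^ 2 - (α / c) ^ 2) - 1) := by
  have hb : 0 < α / c := div_pos hα hc
  rw [show (fun x => deriv (fun y => K0Rel m α c x y) I₂) =
      (fun x => m * c ^ 2 * (α / c) ^ 2 /
        Real.sqrt ((x - I₂ + Real.sqrt (I₂ ^ 2 - (α / c) ^ 2)) ^ 2 + (α / c) ^ 2) ^ 3 *
        (I₂ / Real.sqrt (I₂ ^ 2 - (α / c) ^ 2) - 1))
      from funext fun x => derivy m α c x I₂ hα hc hI₂]
  have hg := hasDerivAt_g' (m * c ^ 2) (α / c)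
    (I₁ - I₂ + Real.sqrt (I₂ ^ 2 - (α / c) ^ 2)) hb
  have hinner : HasDerivAt (fun x : ℝ => x - I₂ + Real.sqrt (I₂ ^ 2 - (α / c) ^ 2)) 1 I₁ := by
    simpa using ((hasDerivAt_id I₁).sub_const I₂).add_const (Real.sqrt (I₂ ^ 2 - (α / c) ^ 2))
  have h := ((hg.comp I₁ hinner).mul_const (I₂ / Real.sqrt (I₂ ^ 2 - (α / c) ^ 2) - 1)).deriv
  simpa [Function.comp_def] using h

lemma deriv21 (m α c I₁ I₂ : ℝ) (hα : 0 < α) (hc : 0 < c) (hI₂ : α / c < I₂) :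
    deriv (fun y => deriv (fun x => K0Rel m α c x y) I₁) I₂ =
      -(3 * (m * c ^ 2) * (α / c) ^ 2 * (I₁ - I₂ + Real.sqrt (I₂ ^ 2 - (α / c) ^ 2))) /
        Real.sqrt ((I₁ - I₂ + Real.sqrt (I₂ ^ 2 - (α / c) ^ 2)) ^ 2 + (α / c) ^ 2) ^ 5 *
        (I₂ / Real.sqrt (I₂ ^ 2 - (α / c) ^ 2) - 1) := by
  have hb : 0 < α / c := div_pos hα hc
  have hopen : {y : ℝ | α / c < y} ∈ nhds I₂ :=
    (isOpen_lt continuous_const continuous_id).mem_nhds hI₂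
  have hfe : (fun y => deriv (fun x => K0Rel m α c x y) I₁) =ᶠ[nhds I₂]
      (fun y => m * c ^ 2 * (α / c) ^ 2 /
        Real.sqrt ((I₁ - y + Real.sqrt (y ^ 2 - (α / c) ^ 2)) ^ 2 + (α / c) ^ 2) ^ 3) := by
    filter_upwards [hopen] with y hy'
    exact derivx m α c I₁ y hα hc hy'
  rw [hfe.deriv_eq]
  have hg := hasDerivAt_g' (m * c ^ 2) (α / c)
    (I₁ - I₂ + Real.sqrt (I₂ ^ 2 - (α / c) ^ 2)) hb
  have hinner : HasDerivAt (fun y : ℝ => I₁ - y + Real.sqrt (y ^ 2 - (α / c) ^ 2))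
      (0 - 1 + I₂ / Real.sqrt (I₂ ^ 2 - (α / c) ^ 2)) I₂ :=
    ((hasDerivAt_const I₂ I₁).sub (hasDerivAt_id I₂)).add (hasDerivAt_s (α / c) I₂ hb hI₂)
  have h := (hg.comp I₂ hinner).deriv
  rw [show ((fun t => m * c ^ 2 * (α / c) ^ 2 / Real.sqrt (t ^ 2 + (α / c) ^ 2) ^ 3) ∘
      (fun y : ℝ => I₁ - y + Real.sqrt (y ^ 2 - (α / c) ^ 2))) =
      (fun y => m * c ^ 2 * (α / c) ^ 2 /
        Real.sqrt ((I₁ - y + Real.sqrt (y ^ 2 - (α / c) ^ 2)) ^ 2 + (α / c) ^ 2) ^ 3)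
      from rfl] at h
  rw [h]; ring

lemma deriv22 (m α c I₁ I₂ : ℝ) (hα : 0 < α) (hc : 0 < c) (hI₂ : α / c < I₂) :
    deriv (deriv fun y => K0Rel m α c I₁ y) I₂ =
      -(3 * (m * c ^ 2) * (α / c) ^ 2 * (I₁ - I₂ + Real.sqrt (I₂ ^ 2 - (α / c) ^ 2))) /
        Real.sqrt ((I₁ - I₂ + Real.sqrt (I₂ ^ 2 - (α / c) ^ 2)) ^ 2 + (α / c) ^ 2) ^ 5 *
        (I₂ / Real.sqrt (I₂ ^ 2 - (α / c) ^ 2) - 1) ^ 2 -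
      m * c ^ 2 * (α / c) ^ 2 /
        Real.sqrt ((I₁ - I₂ + Real.sqrt (I₂ ^ 2 - (α / c) ^ 2)) ^ 2 + (α / c) ^ 2) ^ 3 *
        ((α / c) ^ 2 / Real.sqrt (I₂ ^ 2 - (α / c) ^ 2) ^ 3) := by
  have hb : 0 < α / c := div_pos hα hc
  have hspos : (0:ℝ) < I₂ ^ 2 - (α / c) ^ 2 := by nlinarith
  have hs : 0 < Real.sqrt (I₂ ^ 2 - (α / c) ^ 2) := Real.sqrt_pos.2 hspos
  have hs2 : Real.sqrt (I₂ ^ 2 - (α / c) ^ 2) ^ 2 = I₂ ^ 2 - (α / c) ^ 2 :=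
    Real.sq_sqrt hspos.le
  have hopen : {y : ℝ | α / c < y} ∈ nhds I₂ :=
    (isOpen_lt continuous_const continuous_id).mem_nhds hI₂
  have hfe : (deriv fun y => K0Rel m α c I₁ y) =ᶠ[nhds I₂]
      (fun y => m * c ^ 2 * (α / c) ^ 2 /
        Real.sqrt ((I₁ - y + Real.sqrt (y ^ 2 - (α / c) ^ 2)) ^ 2 + (α / c) ^ 2) ^ 3 *
        (y / Real.sqrt (y ^ 2 - (α / c) ^ 2) - 1)) := by
    filter_upwards [hopen] with y hy'
    exact derivy m α c I₁ y hα hc hy'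
  rw [hfe.deriv_eq]
  have hg := hasDerivAt_g' (m * c ^ 2) (α / c)
    (I₁ - I₂ + Real.sqrt (I₂ ^ 2 - (α / c) ^ 2)) hb
  have hinner : HasDerivAt (fun y : ℝ => I₁ - y + Real.sqrt (y ^ 2 - (α / c) ^ 2))
      (0 - 1 + I₂ / Real.sqrt (I₂ ^ 2 - (α / c) ^ 2)) I₂ :=
    ((hasDerivAt_const I₂ I₁).sub (hasDerivAt_id I₂)).add (hasDerivAt_s (α / c) I₂ hb hI₂)
  have hA := hg.comp I₂ hinner
  rw [show ((fun t => m * c ^ 2 * (α / c) ^ 2 / Real.sqrt (t ^ 2 + (α / c) ^ 2) ^ 3) ∘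
      (fun y : ℝ => I₁ - y + Real.sqrt (y ^ 2 - (α / c) ^ 2))) =
      (fun y => m * c ^ 2 * (α / c) ^ 2 /
        Real.sqrt ((I₁ - y + Real.sqrt (y ^ 2 - (α / c) ^ 2)) ^ 2 + (α / c) ^ 2) ^ 3)
      from rfl] at hA
  have hB : HasDerivAt (fun y : ℝ => y / Real.sqrt (y ^ 2 - (α / c) ^ 2) - 1)
      ((1 * Real.sqrt (I₂ ^ 2 - (α / c) ^ 2) -
        I₂ * (I₂ / Real.sqrt (I₂ ^ 2 - (α / c) ^ 2))) /
        Real.sqrt (I₂ ^ 2 - (α / c) ^ 2) ^ 2) I₂ :=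
    ((hasDerivAt_id I₂).div (hasDerivAt_s (α / c) I₂ hb hI₂) hs.ne').sub_const 1
  have h := (hA.fun_mul hB).deriv
  rw [h]
  have hB' : (1 * Real.sqrt (I₂ ^ 2 - (α / c) ^ 2) -
        I₂ * (I₂ / Real.sqrt (I₂ ^ 2 - (α / c) ^ 2))) /
        Real.sqrt (I₂ ^ 2 - (α / c) ^ 2) ^ 2 =
      -((α / c) ^ 2 / Real.sqrt (I₂ ^ 2 - (α / c) ^ 2) ^ 3) :=
    aux_sder _ _ _ hs hs2
  rw [hB']
  ring

/-- On the open set `{I₂ > α/c, I₁ > I₂}` the Hessian of `K₀` is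
negative definite; in particular the determinant of the bordered matrix
`[[∇²K₀, ∇K₀ᵀ], [∇K₀, 0]]` is nonzero (isoenergetic non-degeneracy). -/
theorem isoenergetic_nondeg_rel (m α c I₁ I₂ : ℝ) (hm : 0 < m) (hα : 0 < α) (hc : 0 < c)
    (hI₂ : α / c < I₂) (hI : I₂ < I₁) :
    (∀ v : Fin 2 → ℝ, v ≠ 0 →
      ((!![K0Rel₁₁ m α c I₁ I₂, K0Rel₁₂ m α c I₁ I₂;
           K0Rel₂₁ m α c I₁ I₂, K0Rel₂₂ m α c I₁ I₂] :
          Matrix (Fin 2) (Fin 2) ℝ).mulVec v) ⬝ᵥ v < 0) ∧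
    (!![K0Rel₁₁ m α c I₁ I₂, K0Rel₁₂ m α c I₁ I₂, K0Rel₁ m α c I₁ I₂;
        K0Rel₂₁ m α c I₁ I₂, K0Rel₂₂ m α c I₁ I₂, K0Rel₂ m α c I₁ I₂;
        K0Rel₁ m α c I₁ I₂,  K0Rel₂ m α c I₁ I₂,  0] :
      Matrix (Fin 3) (Fin 3) ℝ).det ≠ 0 := by
  have hb : 0 < α / c := div_pos hα hc
  have hspos : (0:ℝ) < I₂ ^ 2 - (α / c) ^ 2 := by nlinarith
  have hs : 0 < Real.sqrt (I₂ ^ 2 - (α / c) ^ 2) := Real.sqrt_pos.2 hspos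
  have hN : 0 < I₁ - I₂ + Real.sqrt (I₂ ^ 2 - (α / c) ^ 2) := by linarith
  have hS : 0 < Real.sqrt ((I₁ - I₂ + Real.sqrt (I₂ ^ 2 - (α / c) ^ 2)) ^ 2 + (α / c) ^ 2) :=
    Real.sqrt_pos.2 (by positivity)
  obtain ⟨P, Q, w, r, hP, hQ, hr, e1, e2, e11, e12, e21, e22⟩ :
      ∃ P Q w r : ℝ, 0 < P ∧ 0 < Q ∧ 0 < r ∧
        K0Rel₁ m α c I₁ I₂ = P ∧ K0Rel₂ m α c I₁ I₂ = P * w ∧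
        K0Rel₁₁ m α c I₁ I₂ = -Q ∧ K0Rel₁₂ m α c I₁ I₂ = -Q * w ∧
        K0Rel₂₁ m α c I₁ I₂ = -Q * w ∧ K0Rel₂₂ m α c I₁ I₂ = -Q * w ^ 2 - P * r := by
    refine ⟨m * c ^ 2 * (α / c) ^ 2 /
        Real.sqrt ((I₁ - I₂ + Real.sqrt (I₂ ^ 2 - (α / c) ^ 2)) ^ 2 + (α / c) ^ 2) ^ 3,
      3 * (m * c ^ 2) * (α / c) ^ 2 * (I₁ - I₂ + Real.sqrt (I₂ ^ 2 - (α / c) ^ 2)) /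
        Real.sqrt ((I₁ - I₂ + Real.sqrt (I₂ ^ 2 - (α / c) ^ 2)) ^ 2 + (α / c) ^ 2) ^ 5,
      I₂ / Real.sqrt (I₂ ^ 2 - (α / c) ^ 2) - 1,
      (α / c) ^ 2 / Real.sqrt (I₂ ^ 2 - (α / c) ^ 2) ^ 3,
      by positivity,
      div_pos (by positivity) (by positivity),
      by positivity, ?_, ?_, ?_, ?_, ?_, ?_⟩
    · rw [K0Rel₁]; exact derivx m α c I₁ I₂ hα hc hI₂
    · rw [K0Rel₂]; exact derivy m α c I₁ I₂ hα hc hI₂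
    · rw [K0Rel₁₁, deriv11 m α c I₁ I₂ hα hc hI₂]; ring
    · rw [K0Rel₁₂, deriv12 m α c I₁ I₂ hα hc hI₂]; ring
    · rw [K0Rel₂₁, deriv21 m α c I₁ I₂ hα hc hI₂]; ring
    · rw [K0Rel₂₂, deriv22 m α c I₁ I₂ hα hc hI₂]; ring
  constructor
  · intro v hv
    rw [e11, e12, e21, e22]
    have hexpand : ((!![-Q, -Q * w; -Q * w, -Q * w ^ 2 - P * r] :
        Matrix (Fin 2) (Fin 2) ℝ).mulVec v) ⬝ᵥ v =
        -(Q * (v 0 + w * v 1) ^ 2) - P * r * (v 1) ^ 2 := by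
      simp [Matrix.mulVec, dotProduct, Fin.sum_univ_two]
      ring
    rw [hexpand]
    rcases eq_or_ne (v 1) 0 with h1 | h1
    · have h0 : v 0 ≠ 0 := by
        intro h0
        exact hv (funext fun i => by fin_cases i <;> simp [h0, h1])
      rw [h1]
      nlinarith [mul_pos hQ (pow_two_pos_of_ne_zero h0), mul_pos hP hr]
    · nlinarith [mul_pos (mul_pos hP hr) (pow_two_pos_of_ne_zero h1),
        mul_nonneg hQ.le (sq_nonneg (v 0 + w * v 1))]
  · rw [e1, e2, e11, e12, e21, e22]
    have hdet : (!![-Q, -Q * w, P; -Q * w, -Q * w ^ 2 - P * r, P * w; P, P * w, 0] :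
        Matrix (Fin 3) (Fin 3) ℝ).det = P ^ 2 * P * r := by
      rw [Matrix.det_fin_three]
      simp
      ring
    rw [hdet]
    positivity
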